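/- arXiv:2009.03460 — 2 statements merged into one kernel-verified Lean document; each statement's English description precedes it below -/
import Mathlib

section
/- Let q be an odd prime, h an integer with q ∤ h, and a an integer with q ∤ a. Then Σ_{w=1}^{W} Σ_{x ∈ 𝔽_q, x² = a w} exp(2πi h x / q) has absolute value at most C·√q·log q for an absolute constant C, uniformly for 1 ≤ W ≤ q. -/
/-!
Write `ψ = ZMod.stdAddChar`. Detecting `y² = aw` by orthogonality, `Σ_t ψ(t (aw - y²))`, turns
`q` times the sum into `Σ_t G(-t) B(t)` with the complete quadratic Gauss sums
`G(b) = Σ_y ψ(b y² + h y)` and the incomplete linear sums `B(t) = Σ_{w ≤ W} ψ(t a w)`.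
Here `G(0) = 0` and `|G(b)| = √q` for `b ≠ 0`, while `B` is a geometric sum, so
`|B(t)| ≤ 2 / |ψ(ta) - 1| ≪ q / ‖ta / q‖`; summing over `t ≠ 0` gives a harmonic sum `≪ q log q`.
-/
open Finset ComplexConjugate

section QuadraticSums

variable {F : Type*} [Field F] [Fintype F] [DecidableEq F] {ψ : AddChar F ℂ}

theorem AddChar.norm_sum_quadratic (hψ : ψ.IsPrimitive) (h2 : (2 : F) ≠ 0) {b : F} (hb : b ≠ 0)
    (c : F) : ‖∑ x, ψ (b * x ^ 2 + c * x)‖ = √(Fintype.card F) := by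
  set G := ∑ x, ψ (b * x ^ 2 + c * x)
  have hG : G * conj G = Fintype.card F := by
    calc G * conj G
        = ∑ y, ∑ x, ψ (b * x ^ 2 + c * x) * ψ (-(b * y ^ 2 + c * y)) := by
          simp_rw [G, map_sum, ← AddChar.map_neg_eq_conj, sum_mul_sum]
          exact sum_comm
      -- substituting `x = y + u` leaves a phase that is linear in `y`
      _ = ∑ y, ∑ u, ψ (b * u ^ 2 + c * u) * ψ (y * (2 * b * u)) := by
          refine sum_congr rfl fun y _ => ?_
          rw [← Equiv.sum_comp (Equiv.addLeft y)]
          refine sum_congr rfl fun u _ => ?_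
          simp only [Equiv.coe_addLeft, ← AddChar.map_add_eq_mul]
          ring_nf
      _ = ∑ u, ψ (b * u ^ 2 + c * u) * ∑ y, ψ (y * (2 * b * u)) := by
          rw [sum_comm]
          simp_rw [mul_sum]
      _ = Fintype.card F := by
          simp_rw [AddChar.sum_mulShift _ hψ, mul_eq_zero, h2, hb, false_or]
          simp
  rw [Complex.mul_conj, Complex.normSq_eq_norm_sq] at hG
  rw [← Real.sqrt_sq (norm_nonneg G)]
  exact congrArg Real.sqrt (mod_cast hG)

theorem AddChar.card_mul_sum_sum_sqrt_eq (hψ : ψ.IsPrimitive) {ι : Type*} (s : Finset ι)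
    (f : ι → F) (h : F) :
    Fintype.card F * ∑ i ∈ s, ∑ y with y ^ 2 = f i, ψ (h * y)
      = ∑ t, (∑ y, ψ (-t * y ^ 2 + h * y)) * ∑ i ∈ s, ψ (t * f i) := by
  have hdetect (i : ι) (y : F) : ∑ t, ψ (h * y) * ψ (t * (f i - y ^ 2))
      = if y ^ 2 = f i then Fintype.card F * ψ (h * y) else 0 := by
    simp_rw [← mul_sum, AddChar.sum_mulShift _ hψ, sub_eq_zero]
    rcases eq_or_ne (y ^ 2) (f i) with hy | hy
    · simp [hy, mul_comm]
    · simp [hy, hy.symm]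
  calc Fintype.card F * ∑ i ∈ s, ∑ y with y ^ 2 = f i, ψ (h * y)
      = ∑ i ∈ s, ∑ y, ∑ t, ψ (h * y) * ψ (t * (f i - y ^ 2)) := by
        simp_rw [hdetect, mul_sum, sum_filter]
    _ = ∑ t, ∑ y, ∑ i ∈ s, ψ (-t * y ^ 2 + h * y) * ψ (t * f i) := by
        rw [sum_comm]
        refine (sum_congr rfl fun y _ => sum_comm).trans sum_comm |>.trans ?_
        refine sum_congr rfl fun t _ => sum_congr rfl fun y _ => sum_congr rfl fun i _ => ?_
        rw [← AddChar.map_add_eq_mul, ← AddChar.map_add_eq_mul]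
        ring_nf
    _ = ∑ t, (∑ y, ψ (-t * y ^ 2 + h * y)) * ∑ i ∈ s, ψ (t * f i) := by
        simp_rw [sum_mul_sum]

theorem AddChar.card_mul_norm_sum_sum_sqrt_le (hψ : ψ.IsPrimitive) (h2 : (2 : F) ≠ 0) {h : F}
    (hh : h ≠ 0) {ι : Type*} (s : Finset ι) (f : ι → F) :
    Fintype.card F * ‖∑ i ∈ s, ∑ y with y ^ 2 = f i, ψ (h * y)‖
      ≤ √(Fintype.card F) * ∑ t ∈ univ.erase 0, ‖∑ i ∈ s, ψ (t * f i)‖ := by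
  have hG₀ : ∑ y, ψ (-0 * y ^ 2 + h * y) = 0 := by
    simpa [hh, mul_comm] using AddChar.sum_mulShift h hψ
  calc Fintype.card F * ‖∑ i ∈ s, ∑ y with y ^ 2 = f i, ψ (h * y)‖
      = ‖∑ t ∈ univ.erase 0, (∑ y, ψ (-t * y ^ 2 + h * y)) * ∑ i ∈ s, ψ (t * f i)‖ := by
        rw [← Complex.norm_natCast, ← norm_mul, card_mul_sum_sum_sqrt_eq hψ,
          ← add_sum_erase _ _ (mem_univ 0), hG₀, zero_mul, zero_add]
    _ ≤ ∑ t ∈ univ.erase 0, ‖∑ y, ψ (-t * y ^ 2 + h * y)‖ * ‖∑ i ∈ s, ψ (t * f i)‖ :=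
        norm_sum_le_of_le _ fun t _ => norm_mul_le _ _
    _ = √(Fintype.card F) * ∑ t ∈ univ.erase 0, ‖∑ i ∈ s, ψ (t * f i)‖ := by
        rw [mul_sum]
        refine sum_congr rfl fun t ht => ?_
        rw [norm_sum_quadratic hψ h2 (neg_ne_zero.2 (ne_of_mem_erase ht))]

end QuadraticSums

open Real in
theorem Real.two_mul_mul_one_sub_le_sin_pi_mul {β : ℝ} (h0 : 0 ≤ β) (h1 : β ≤ 1) :
    2 * β * (1 - β) ≤ sin (π * β) := by
  -- Jordan's inequality on whichever of `β`, `1 - β` is at most `1 / 2`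
  wlog hβ : β ≤ 1 / 2 generalizing β
  · have h := this (β := 1 - β) (by linarith) (by linarith) (by linarith)
    rw [show π * (1 - β) = π - π * β by ring, sin_pi_sub] at h
    linarith
  have := mul_le_sin (x := π * β) (by positivity) (by nlinarith [pi_pos])
  rw [← mul_assoc, div_mul_cancel₀ _ pi_ne_zero] at this
  nlinarith

open Real in
theorem Real.inv_sin_pi_mul_le {β : ℝ} (h0 : 0 < β) (h1 : β < 1) :
    (sin (π * β))⁻¹ ≤ (β⁻¹ + (1 - β)⁻¹) / 2 := by
  have h1' : 0 < 1 - β := by linarith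
  calc (sin (π * β))⁻¹ ≤ (2 * β * (1 - β))⁻¹ :=
        inv_anti₀ (by positivity) (two_mul_mul_one_sub_le_sin_pi_mul h0.le h1.le)
    _ = (β⁻¹ + (1 - β)⁻¹) / 2 := by field_simp; ring

theorem Complex.norm_sum_Icc_pow_le {z : ℂ} (hz : ‖z‖ = 1) (hz1 : z ≠ 1) (W : ℕ) :
    ‖∑ w ∈ Icc 1 W, z ^ w‖ ≤ 2 / ‖z - 1‖ := by
  have hgeom : ∑ w ∈ Icc 1 W, z ^ w = z * ((z ^ W - 1) / (z - 1)) := by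
    rw [← geom_sum_eq hz1, mul_sum, ← Ico_add_one_right_eq_Icc, sum_Ico_eq_sum_range,
      add_tsub_cancel_right]
    simp_rw [pow_add, pow_one]
  rw [hgeom, norm_mul, hz, one_mul, norm_div]
  gcongr
  calc ‖z ^ W - 1‖ ≤ ‖z ^ W‖ + ‖(1 : ℂ)‖ := norm_sub_le _ _
    _ = 2 := by rw [norm_pow, hz, one_pow, norm_one]; norm_num

namespace ZMod

variable {q : ℕ} [NeZero q]

open Real in
theorem norm_stdAddChar_sub_one (u : ZMod q) :
    ‖stdAddChar u - 1‖ = 2 * sin (π * ((u.val : ℝ) / q)) := by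
  have hβ : (u.val : ℝ) / q ≤ 1 :=
    div_le_one_of_le₀ (mod_cast u.val_lt.le) (Nat.cast_nonneg q)
  have hsin : 0 ≤ sin (π * ((u.val : ℝ) / q)) :=
    sin_nonneg_of_nonneg_of_le_pi (by positivity) (mul_le_of_le_one_right pi_pos.le hβ)
  have hexp : 2 * π * Complex.I * u.val / q = Complex.I * (2 * π * ((u.val : ℝ) / q) : ℝ) := by
    push_cast
    ring
  rw [stdAddChar_apply, toCircle_apply, hexp, Complex.norm_exp_I_mul_ofReal_sub_one,
    mul_assoc 2 π, mul_div_cancel_left₀ _ two_ne_zero, Real.norm_eq_abs,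
    abs_of_nonneg (by positivity)]

theorem norm_sum_Icc_stdAddChar_le {u : ZMod q} (hu : u ≠ 0) (W : ℕ) :
    ‖∑ w ∈ Icc 1 W, stdAddChar (u * (w : ZMod q))‖
      ≤ q / 2 * ((u.val : ℝ)⁻¹ + ((-u).val : ℝ)⁻¹) := by
  have : NeZero u := ⟨hu⟩
  have hq : (0 : ℝ) < q := by exact_mod_cast (NeZero.pos q)
  have hv : (0 : ℝ) < u.val := by exact_mod_cast val_pos.2 hu
  have hvq : (u.val : ℝ) < q := by exact_mod_cast u.val_lt
  have hψ : stdAddChar u ≠ 1 := by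
    rw [← AddChar.map_zero_eq_one (stdAddChar (N := q))]
    exact injective_stdAddChar.ne hu
  calc ‖∑ w ∈ Icc 1 W, stdAddChar (u * (w : ZMod q))‖ = ‖∑ w ∈ Icc 1 W, stdAddChar u ^ w‖ := by
        simp_rw [mul_comm u, ← nsmul_eq_mul, AddChar.map_nsmul_eq_pow]
    _ ≤ 2 / ‖stdAddChar u - 1‖ := Complex.norm_sum_Icc_pow_le (AddChar.norm_apply _ _) hψ W
    _ = (Real.sin (Real.pi * ((u.val : ℝ) / q)))⁻¹ := by rw [norm_stdAddChar_sub_one]; field_simp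
    _ ≤ (((u.val : ℝ) / q)⁻¹ + (1 - (u.val : ℝ) / q)⁻¹) / 2 :=
        Real.inv_sin_pi_mul_le (by positivity) ((div_lt_one hq).2 hvq)
    _ = q / 2 * ((u.val : ℝ)⁻¹ + ((-u).val : ℝ)⁻¹) := by
        rw [val_neg_of_ne_zero, Nat.cast_sub u.val_le]
        field_simp

theorem sum_range_natCast {M : Type*} [AddCommMonoid M] (g : ZMod q → M) :
    ∑ x ∈ range q, g x = ∑ y, g y := by
  obtain ⟨n, rfl⟩ := Nat.exists_eq_succ_of_ne_zero (NeZero.ne q)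
  rw [← Fin.sum_univ_eq_sum_range]
  exact sum_congr rfl fun y _ => congrArg g (natCast_zmod_val (n := n + 1) y)

theorem sum_inv_val_le : ∑ u : ZMod q, (u.val : ℝ)⁻¹ ≤ 1 + Real.log q := by
  obtain ⟨n, rfl⟩ := Nat.exists_eq_succ_of_ne_zero (NeZero.ne q)
  calc ∑ u : ZMod (n + 1), (u.val : ℝ)⁻¹ = harmonic n := by
        have hval : ∀ k ∈ range n, (((k + 1 : ℕ) : ZMod (n + 1)).val : ℝ)⁻¹ = ((k + 1 : ℕ) : ℝ)⁻¹ :=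
          fun k hk => by rw [val_cast_of_lt (by simpa using hk)]
        rw [← sum_range_natCast, sum_range_succ', sum_congr rfl hval]
        simp [harmonic]
    _ ≤ harmonic (n + 1) := by
        rw [harmonic_succ, Rat.cast_add]
        exact le_add_of_nonneg_right (by positivity)
    _ ≤ 1 + Real.log (n + 1 : ℕ) := harmonic_le_one_add_log _

theorem sum_norm_sum_Icc_stdAddChar_le (W : ℕ) :
    ∑ u ∈ univ.erase (0 : ZMod q), ‖∑ w ∈ Icc 1 W, stdAddChar (u * (w : ZMod q))‖
      ≤ q * (1 + Real.log q) := by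
  calc ∑ u ∈ univ.erase (0 : ZMod q), ‖∑ w ∈ Icc 1 W, stdAddChar (u * (w : ZMod q))‖
      ≤ ∑ u ∈ univ.erase (0 : ZMod q), q / 2 * ((u.val : ℝ)⁻¹ + ((-u).val : ℝ)⁻¹) :=
        sum_le_sum fun u hu => norm_sum_Icc_stdAddChar_le (ne_of_mem_erase hu) W
    _ = q / 2 * ∑ u : ZMod q, ((u.val : ℝ)⁻¹ + ((-u).val : ℝ)⁻¹) := by
        rw [← mul_sum, sum_erase]
        simp
    _ = q * ∑ u : ZMod q, (u.val : ℝ)⁻¹ := by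
        rw [sum_add_distrib, Fintype.sum_equiv (Equiv.neg (ZMod q)) (fun u => ((-u).val : ℝ)⁻¹)
          (fun u => (u.val : ℝ)⁻¹) fun _ => rfl]
        ring
    _ ≤ q * (1 + Real.log q) := by gcongr; exact sum_inv_val_le

end ZMod

theorem ZMod.norm_sum_Icc_sum_sqrt_le {q : ℕ} [Fact q.Prime] (hq2 : q ≠ 2) {c h : ZMod q}
    (hc : c ≠ 0) (hh : h ≠ 0) (W : ℕ) :
    ‖∑ w ∈ Icc 1 W, ∑ y with y ^ 2 = c * w, stdAddChar (h * y)‖ ≤ √q * (1 + Real.log q) := by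
  have hq : (0 : ℝ) < q := by exact_mod_cast (Fact.out : q.Prime).pos
  have h2 : (2 : ZMod q) ≠ 0 := Ring.two_ne_zero (by rwa [ringChar_zmod_n])
  have hcompl := AddChar.card_mul_norm_sum_sum_sqrt_le (isPrimitive_stdAddChar q) h2 hh
    (Icc 1 W) (fun w : ℕ => c * w)
  have hscale : ∑ t ∈ univ.erase (0 : ZMod q), ‖∑ w ∈ Icc 1 W, stdAddChar (t * (c * (w : ZMod q)))‖
      = ∑ u ∈ univ.erase 0, ‖∑ w ∈ Icc 1 W, stdAddChar (u * (w : ZMod q))‖ :=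
    sum_equiv (Equiv.mulRight₀ c hc) (by simp [hc]) fun t _ => by simp [mul_assoc]
  beta_reduce at hcompl
  rw [ZMod.card, hscale] at hcompl
  refine le_of_mul_le_mul_left ?_ hq
  calc (q : ℝ) * ‖∑ w ∈ Icc 1 W, ∑ y with y ^ 2 = c * w, stdAddChar (h * y)‖
      ≤ √q * (q * (1 + Real.log q)) :=
        hcompl.trans (by gcongr; exact sum_norm_sum_Icc_stdAddChar_le W)
    _ = q * (√q * (1 + Real.log q)) := by ring

/-- Exponential sums over square roots modulo a prime: `Σ_{w ≤ W} Σ_{x² = aw} e_q(hx) ≪ √q log q`,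
with an absolute constant, uniformly in `1 ≤ W ≤ q`.  (Elements of `𝔽_q` are represented by
their integer representatives `x ∈ {0, …, q−1}`.) -/
theorem exp_sum_sqrt_bound :
    ∃ C : ℝ, 0 < C ∧ ∀ (q : ℕ), q.Prime → q ≠ 2 → ∀ (a h : ℤ),
      ¬ (q : ℤ) ∣ a → ¬ (q : ℤ) ∣ h → ∀ (W : ℕ), 1 ≤ W → W ≤ q →
      ‖(∑ w ∈ Finset.Icc 1 W,
          ∑ x ∈ (Finset.range q).filter
              (fun x : ℕ => ((x : ZMod q)) ^ 2 = ((a * w : ℤ) : ZMod q)),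
            Complex.exp (2 * (Real.pi : ℂ) * Complex.I * ((h * x : ℤ) : ℂ) / (q : ℂ)))‖
        ≤ C * Real.sqrt q * Real.log q := by
  refine ⟨2, two_pos, fun q hq hq2 a h ha hh W _ _ => ?_⟩
  have : Fact q.Prime := ⟨hq⟩
  have hsum (w : ℕ) :
      ∑ x ∈ (range q).filter (fun x : ℕ => (x : ZMod q) ^ 2 = ((a * w : ℤ) : ZMod q)),
          Complex.exp (2 * (Real.pi : ℂ) * Complex.I * ((h * x : ℤ) : ℂ) / (q : ℂ))
        = ∑ y with y ^ 2 = (a : ZMod q) * w, ZMod.stdAddChar ((h : ZMod q) * y) := by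
    rw [sum_filter, sum_filter, ← ZMod.sum_range_natCast]
    refine sum_congr rfl fun x _ => ?_
    rw [← ZMod.stdAddChar_coe]
    push_cast
    rfl
  have hlog : 1 ≤ Real.log q := by
    rw [Real.le_log_iff_exp_le (by exact_mod_cast hq.pos)]
    have : (3 : ℝ) ≤ q := by exact_mod_cast (hq.two_le.lt_of_ne' hq2 : 2 < q)
    linarith [Real.exp_one_lt_d9]
  simp_rw [hsum]
  have hne_zero (n : ℤ) (hn : ¬ (q : ℤ) ∣ n) : (n : ZMod q) ≠ 0 := by
    rwa [Ne, ZMod.intCast_zmod_eq_zero_iff_dvd]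
  calc _ ≤ √q * (1 + Real.log q) :=
        ZMod.norm_sum_Icc_sum_sqrt_le hq2 (hne_zero a ha) (hne_zero h hh) W
    _ ≤ 2 * √q * Real.log q := by nlinarith [Real.sqrt_nonneg q]
end

section
/- Completion of incomplete sums: let q be a positive integer and f : ℤ/qℤ → ℂ. For any integers Y and 1 ≤ W ≤ q, |Σ_{w=Y+1}^{Y+W} f(w)| ≤ (1/q)·Σ_{t=0}^{q−1} |F(t)| · min(W, 1/(2‖t/q‖)) summed appropriately, and in particular |Σ_{w=1}^{W} f(w)| ≤ (log q + 2)·max_{0 ≤ t < q} |F(t)|, where F(t) = Σ_{x ∈ ℤ/qℤ} f(x) exp(−2πi t x/q) is the discrete Fourier transform of f. -/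
/-!
Fourier inversion writes `∑_{w=1}^W f(w)` as `q⁻¹ ∑_t F(t) ∑_{w=1}^W e(tw/q)`, where
`e(x) = exp(2πix)`. The inner sum is `W ≤ q` for `t = 0`; otherwise it is a geometric sum of
ratio `z = e(t/q)`, bounded by
`2 / |z - 1| ≤ 1 / (2‖t/q‖) ≤ (q/2) (1/t + 1/(q-t))`. Summing over `t` gives
`q (1 + H_{q-1}) ≤ q (2 + log q)`.
-/

open Finset Complex ZMod
open scoped Real

lemma norm_geom_sum_Ico_le {𝕜 : Type*} [NormedDivisionRing 𝕜] {z : 𝕜} (hz : ‖z‖ ≤ 1)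
    (hz1 : z ≠ 1) (m n : ℕ) : ‖∑ i ∈ Ico m n, z ^ i‖ ≤ 2 / ‖z - 1‖ := by
  rcases lt_or_ge n m with hnm | hmn
  · rw [Ico_eq_empty_of_le hnm.le, sum_empty, norm_zero]
    positivity
  rw [geom_sum_Ico hz1 hmn, norm_div]
  gcongr
  calc ‖z ^ n - z ^ m‖ ≤ ‖z ^ n‖ + ‖z ^ m‖ := norm_sub_le _ _
    _ ≤ 1 + 1 := by
        gcongr <;> rw [norm_pow] <;> exact pow_le_one₀ (norm_nonneg z) hz
    _ = 2 := one_add_one_eq_two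

lemma four_mul_abs_sub_round_le_norm_exp_sub_one (x : ℝ) :
    4 * |x - round x| ≤ ‖exp (2 * π * I * x) - 1‖ := by
  -- periodicity reduces to `|y| ≤ 1/2`, where Jordan's inequality `|sin πy| ≥ 2|y|` applies
  set y := x - round x
  have hexp : exp (2 * π * I * x) = exp (I * ↑(2 * π * y)) := by
    rw [← mul_one (exp (I * _)), ← exp_int_mul_two_pi_mul_I (round x), ← exp_add]
    congr 1
    simp only [y]
    push_cast
    ring
  have hy : |π * y| ≤ π / 2 := by
    rw [abs_mul, abs_of_pos Real.pi_pos]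
    nlinarith [abs_sub_round x, Real.pi_pos]
  have hsin := Real.mul_abs_le_abs_sin hy
  rw [hexp, norm_exp_I_mul_ofReal_sub_one, norm_mul, Real.norm_two, Real.norm_eq_abs,
    show 2 * π * y / 2 = π * y by ring]
  rw [abs_mul, abs_of_pos Real.pi_pos] at hsin
  have : 2 / π * (π * |y|) = 2 * |y| := by field_simp
  linarith

lemma four_mul_min_div_le_norm_stdAddChar_sub_one {q : ℕ} [NeZero q] (t : ℕ) :
    4 * ((min (t % q) (q - t % q) : ℕ) : ℝ) / q ≤ ‖stdAddChar (t : ZMod q) - 1‖ := by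
  have h := four_mul_abs_sub_round_le_norm_exp_sub_one ((t : ℝ) / q)
  rw [abs_sub_round_div_natCast_eq, ← mul_div_assoc] at h
  convert h using 3
  rw [← Int.cast_natCast, stdAddChar_coe]
  push_cast
  rw [mul_div_assoc]

lemma ZMod.sum_univ_eq_sum_range {M : Type*} [AddCommMonoid M] {q : ℕ} [NeZero q]
    (g : ZMod q → M) : ∑ k, g k = ∑ t ∈ range q, g t := by
  refine (sum_nbij' (fun t : ℕ ↦ (t : ZMod q)) ZMod.val ?_ ?_ ?_ ?_ ?_).symm <;>
    simp +contextual [ZMod.val_lt, Nat.mod_eq_of_lt]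

lemma sum_eq_inv_mul_sum_dft_mul_sum_pow {q : ℕ} [NeZero q] (f : ZMod q → ℂ) (s : Finset ℕ) :
    ∑ n ∈ s, f n = (q : ℂ)⁻¹ * ∑ k, 𝓕 f k * ∑ n ∈ s, stdAddChar k ^ n := by
  conv_lhs => rw [← dft.symm_apply_apply f]
  simp only [invDFT_apply, smul_eq_mul, ← mul_sum]
  rw [sum_comm]
  congr 1
  refine sum_congr rfl fun k _ ↦ ?_
  rw [mul_sum]
  refine sum_congr rfl fun n _ ↦ ?_
  rw [mul_comm k, ← nsmul_eq_mul, AddChar.map_nsmul_eq_pow, mul_comm]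

lemma dft_natCast {q : ℕ} [NeZero q] (f : ZMod q → ℂ) (t : ℕ) :
    𝓕 f t = ∑ x : ZMod q, f x * exp (-(2 * π * I * t * ((x.val : ℕ) : ℂ) / q)) := by
  rw [dft_apply]
  refine sum_congr rfl fun x _ ↦ ?_
  have harg : -(x * (t : ZMod q)) = ((-((x.val : ℤ) * t) : ℤ) : ZMod q) := by
    push_cast
    rw [ZMod.natCast_zmod_val]
  rw [smul_eq_mul, mul_comm, harg, stdAddChar_coe]
  congr 2
  push_cast
  ring

lemma norm_sum_Icc_stdAddChar_pow_le {q t : ℕ} [NeZero q] (ht0 : 0 < t) (htq : t < q) (W : ℕ) :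
    ‖∑ w ∈ Icc 1 W, stdAddChar (t : ZMod q) ^ w‖ ≤ q / (2 * (min t (q - t) : ℕ)) := by
  have hdist := four_mul_min_div_le_norm_stdAddChar_sub_one (q := q) t
  rw [Nat.mod_eq_of_lt htq] at hdist
  have hmin : (0 : ℝ) < (min t (q - t) : ℕ) := by norm_cast; omega
  have hq : (0 : ℝ) < q := by norm_cast; omega
  have hpos : 0 < ‖stdAddChar (t : ZMod q) - 1‖ := lt_of_lt_of_le (by positivity) hdist
  rw [← Ico_add_one_right_eq_Icc]
  refine (norm_geom_sum_Ico_le (Circle.norm_coe _).le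
    (sub_ne_zero.1 (norm_pos_iff.1 hpos)) _ _).trans ?_
  calc 2 / ‖stdAddChar (t : ZMod q) - 1‖ ≤ 2 / (4 * (min t (q - t) : ℕ) / q) := by gcongr
    _ = q / (2 * (min t (q - t) : ℕ)) := by field_simp; ring

lemma inv_min_le_inv_add_inv {a b : ℝ} (ha : 0 < a) (hb : 0 < b) :
    (min a b)⁻¹ ≤ a⁻¹ + b⁻¹ := by
  rcases min_choice a b with h | h <;> rw [h] <;> linarith [inv_pos.2 ha, inv_pos.2 hb]

lemma sum_range_norm_sum_Icc_stdAddChar_pow_le {q W : ℕ} [NeZero q] (hW : W ≤ q) :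
    ∑ t ∈ range q, ‖∑ w ∈ Icc 1 W, stdAddChar (t : ZMod q) ^ w‖ ≤ q * (1 + harmonic (q - 1)) := by
  obtain ⟨n, rfl⟩ := Nat.exists_eq_succ_of_ne_zero (NeZero.ne q)
  have hzero : ‖∑ w ∈ Icc 1 W, stdAddChar ((0 : ℕ) : ZMod (n + 1)) ^ w‖ ≤ (n + 1 : ℕ) := by
    simp only [Nat.cast_zero, AddChar.map_zero_eq_one, one_pow, sum_const, Nat.card_Icc,
      Nat.add_sub_cancel, nsmul_eq_mul, mul_one, Complex.norm_natCast]
    exact_mod_cast hW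
  have hreflect : ∑ i ∈ range n, ((n - i : ℕ) : ℝ)⁻¹ = harmonic n := by
    rw [← sum_range_reflect]
    push_cast [harmonic]
    refine sum_congr rfl fun i hi ↦ ?_
    rw [show n - (n - 1 - i) = i + 1 by have := mem_range.1 hi; omega]
    push_cast
    rfl
  have hterm : ∀ i ∈ range n, ‖∑ w ∈ Icc 1 W, stdAddChar ((i + 1 : ℕ) : ZMod (n + 1)) ^ w‖ ≤
      (n + 1 : ℕ) / 2 * (((i + 1 : ℕ) : ℝ)⁻¹ + ((n - i : ℕ) : ℝ)⁻¹) := by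
    intro i hi
    rw [mem_range] at hi
    refine (norm_sum_Icc_stdAddChar_pow_le i.succ_pos (by omega) W).trans ?_
    rw [show n + 1 - (i + 1) = n - i by omega, Nat.cast_min, div_mul_eq_div_div,
      div_eq_mul_inv _ (min _ _ : ℝ)]
    gcongr
    exact inv_min_le_inv_add_inv (by positivity) (by norm_cast; omega)
  calc ∑ t ∈ range (n + 1), ‖∑ w ∈ Icc 1 W, stdAddChar (t : ZMod (n + 1)) ^ w‖
      ≤ ∑ i ∈ range n, (n + 1 : ℕ) / 2 * (((i + 1 : ℕ) : ℝ)⁻¹ + ((n - i : ℕ) : ℝ)⁻¹)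
        + (n + 1 : ℕ) := by
        rw [sum_range_succ']
        exact add_le_add (sum_le_sum hterm) hzero
    _ = (n + 1 : ℕ) * (1 + harmonic (n + 1 - 1)) := by
        rw [← mul_sum, sum_add_distrib, hreflect, Nat.add_sub_cancel]
        push_cast [harmonic]
        ring

lemma harmonic_sub_one_le_one_add_log (q : ℕ) : (harmonic (q - 1) : ℝ) ≤ 1 + Real.log q := by
  refine (harmonic_le_one_add_log (q - 1)).trans ?_
  rcases (q - 1).eq_zero_or_pos with h | h
  · simp [h, Real.log_natCast_nonneg]
  · gcongr
    exact_mod_cast q.sub_le 1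

theorem completion_of_incomplete_sums_general (q : ℕ) [NeZero q]
    (f : ZMod q → ℂ) (W : ℕ) (hWq : W ≤ q) (B : ℝ)
    (hB : ∀ t : ℕ, t < q →
      ‖(∑ x : ZMod q,
          f x * Complex.exp (-(2 * (Real.pi : ℂ) * Complex.I * (t : ℂ) * ((x.val : ℕ) : ℂ)
            / (q : ℂ))))‖ ≤ B) :
    ‖(∑ w ∈ Finset.Icc 1 W, f (w : ZMod q))‖ ≤ (Real.log q + 2) * B := by
  have hq : (0 : ℝ) < q := by exact_mod_cast NeZero.pos q
  have hF : ∀ t ∈ range q, ‖𝓕 f t‖ ≤ B := fun t ht ↦ dft_natCast f t ▸ hB t (mem_range.1 ht)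
  have hB0 : 0 ≤ B := (norm_nonneg _).trans (hF 0 (mem_range.2 (NeZero.pos q)))
  have hlog := harmonic_sub_one_le_one_add_log q
  rw [sum_eq_inv_mul_sum_dft_mul_sum_pow, ZMod.sum_univ_eq_sum_range]
  calc ‖(q : ℂ)⁻¹ * ∑ t ∈ range q, 𝓕 f t * ∑ w ∈ Icc 1 W, stdAddChar (t : ZMod q) ^ w‖
      ≤ (q : ℝ)⁻¹ * ∑ t ∈ range q, B * ‖∑ w ∈ Icc 1 W, stdAddChar (t : ZMod q) ^ w‖ := by
        rw [norm_mul, norm_inv, Complex.norm_natCast]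
        gcongr
        refine (norm_sum_le _ _).trans (sum_le_sum fun t ht ↦ ?_)
        rw [norm_mul]
        gcongr
        exact hF t ht
    _ ≤ (q : ℝ)⁻¹ * (B * (q * (1 + harmonic (q - 1)))) := by
        rw [← mul_sum]
        gcongr
        exact sum_range_norm_sum_Icc_stdAddChar_pow_le hWq
    _ ≤ (Real.log q + 2) * B := by
        rw [mul_left_comm, inv_mul_cancel_left₀ hq.ne']
        linarith [mul_le_mul_of_nonneg_left hlog hB0]

/-- Completion of incomplete sums: if `F` is the discrete Fourier transform of
`f : ℤ/qℤ → ℂ` and `B` bounds `|F(t)|` for all `0 ≤ t < q`, then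
`|Σ_{w=1}^{W} f(w)| ≤ (log q + 2)·B` for `1 ≤ W ≤ q`. -/
theorem completion_of_incomplete_sums (q : ℕ) [NeZero q] (hq : 2 ≤ q)
    (f : ZMod q → ℂ) (W : ℕ) (hW1 : 1 ≤ W) (hWq : W ≤ q) (B : ℝ)
    (hB : ∀ t : ℕ, t < q →
      ‖(∑ x : ZMod q,
          f x * Complex.exp (-(2 * (Real.pi : ℂ) * Complex.I * (t : ℂ) * ((x.val : ℕ) : ℂ)
            / (q : ℂ))))‖ ≤ B) :
    ‖(∑ w ∈ Finset.Icc 1 W, f (w : ZMod q))‖ ≤ (Real.log q + 2) * B :=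
  completion_of_incomplete_sums_general q f W hWq B hB
end
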